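/- (Equivalence of norms on annular-cylindrical domains) Let m ≠ 2, n ≥ 1, m+n ≥ 3, 0 < r < R < ∞, and let Ω ⊆ {(x,y) ∈ ℝⁿ × ℝᵐ : r < |y| < R}. Then there is a constant c > 0 (depending only on m, r, R) such that for all u ∈ C_0^∞(Ω): ∫_Ω |∇u|² − ((m−2)/2)² ∫_Ω u²/|y|² ≥ c ∫_Ω |∇u|². Consequently the Hardy-deficit norm and the Dirichlet norm are equivalent on C_0^∞(Ω). -/

import Mathlib

open MeasureTheory


open MeasureTheory Real Set
set_option maxHeartbeats 1000000

noncomputable def gfun (α β L t : ℝ) : ℝ := Real.exp (-α*t) * Real.cos (β*(t-L))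
noncomputable def gfun1 (α β L t : ℝ) : ℝ :=
  Real.exp (-α*t) * (-α * Real.cos (β*(t-L)) - β * Real.sin (β*(t-L)))
noncomputable def gfun2 (α β L t : ℝ) : ℝ :=
  Real.exp (-α*t) * ((α^2-β^2) * Real.cos (β*(t-L)) + 2*α*β * Real.sin (β*(t-L)))

lemma hasDerivAt_gfun (α β L t : ℝ) : HasDerivAt (gfun α β L) (gfun1 α β L t) t := by
  have he : HasDerivAt (fun t : ℝ => Real.exp (-α*t)) (Real.exp (-α*t) * (-α)) t :=
    by simpa using ((hasDerivAt_id t).const_mul (-α)).exp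
  have hc : HasDerivAt (fun t : ℝ => Real.cos (β*(t-L))) (-Real.sin (β*(t-L)) * β) t := by
    simpa using (((hasDerivAt_id t).sub_const L).const_mul β).cos
  have := he.mul hc
  refine this.congr_deriv ?_
  unfold gfun1; ring

lemma hasDerivAt_gfun1 (α β L t : ℝ) : HasDerivAt (gfun1 α β L) (gfun2 α β L t) t := by
  have he : HasDerivAt (fun t : ℝ => Real.exp (-α*t)) (Real.exp (-α*t) * (-α)) t :=
    by simpa using ((hasDerivAt_id t).const_mul (-α)).exp
  have hc : HasDerivAt (fun t : ℝ => Real.cos (β*(t-L))) (-Real.sin (β*(t-L)) * β) t := by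
    simpa using (((hasDerivAt_id t).sub_const L).const_mul β).cos
  have hs : HasDerivAt (fun t : ℝ => Real.sin (β*(t-L))) (Real.cos (β*(t-L)) * β) t := by
    simpa using (((hasDerivAt_id t).sub_const L).const_mul β).sin
  have := he.mul ((hc.const_mul (-α)).sub (hs.const_mul β))
  refine this.congr_deriv ?_
  unfold gfun2; simp only [Pi.sub_apply]; ring

lemma gfun2_eq (α β L t : ℝ) :
    gfun2 α β L t = -(2*α) * gfun1 α β L t - (α^2+β^2) * gfun α β L t := by
  unfold gfun gfun1 gfun2; ring

noncomputable def w0fun (α β L s : ℝ) : ℝ :=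
  -gfun1 α β L (Real.log s / 2) / (gfun α β L (Real.log s / 2) * s)

noncomputable def w0dfun (α β L s : ℝ) : ℝ :=
  ((-(gfun2 α β L (Real.log s / 2) * (s⁻¹ / 2))) * (gfun α β L (Real.log s / 2) * s) -
      (-gfun1 α β L (Real.log s / 2)) *
        (gfun1 α β L (Real.log s / 2) * (s⁻¹ / 2) * s + gfun α β L (Real.log s / 2))) /
    (gfun α β L (Real.log s / 2) * s) ^ 2

lemma hasDerivAt_w0fun {α β L s : ℝ} (hs : 0 < s)
    (hg : gfun α β L (Real.log s / 2) ≠ 0) :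
    HasDerivAt (w0fun α β L) (w0dfun α β L s) s := by
  have hl : HasDerivAt (fun s : ℝ => Real.log s / 2) (s⁻¹ / 2) s :=
    (Real.hasDerivAt_log hs.ne').div_const 2
  have hN : HasDerivAt (fun s : ℝ => -gfun1 α β L (Real.log s / 2))
      (-(gfun2 α β L (Real.log s / 2) * (s⁻¹ / 2))) s :=
    by have := (((hasDerivAt_gfun1 α β L (Real.log s / 2)).comp s hl)).neg; exact this
  have hD : HasDerivAt (fun s : ℝ => gfun α β L (Real.log s / 2) * s)
      (gfun1 α β L (Real.log s / 2) * (s⁻¹ / 2) * s + gfun α β L (Real.log s / 2)) s := by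
    have := (((hasDerivAt_gfun α β L (Real.log s / 2)).comp s hl)).mul (hasDerivAt_id s)
    exact this.congr_deriv (by simp)
  exact hN.div hD (mul_ne_zero hg hs.ne')

lemma key_identity {α β L s M : ℝ} (hs : 0 < s)
    (hg : gfun α β L (Real.log s / 2) ≠ 0) (hM : M = 2*α + 2) :
    2*s*(w0dfun α β L s) + M*(w0fun α β L s) - s*(w0fun α β L s)^2 = (α^2+β^2)/s := by
  have h2 := gfun2_eq α β L (Real.log s / 2)
  set G := gfun α β L (Real.log s / 2)
  set G1 := gfun1 α β L (Real.log s / 2)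
  set G2 := gfun2 α β L (Real.log s / 2)
  unfold w0dfun w0fun
  rw [show gfun2 α β L (Real.log s / 2) = G2 from rfl, h2, hM]
  rw [show gfun α β L (Real.log s / 2) = G from rfl, show gfun1 α β L (Real.log s / 2) = G1 from rfl]
  field_simp
  ring

lemma gfun_smooth (α β L : ℝ) : ContDiff ℝ (⊤ : ℕ∞) (gfun α β L) := by
  unfold gfun
  exact ((contDiff_const.mul contDiff_id).exp.mul
    ((contDiff_const.mul (contDiff_id.sub contDiff_const)).cos))

lemma gfun1_smooth (α β L : ℝ) : ContDiff ℝ (⊤ : ℕ∞) (gfun1 α β L) := by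
  unfold gfun1
  exact ((contDiff_const.mul contDiff_id).exp.mul
    (((contDiff_const.mul ((contDiff_const.mul (contDiff_id.sub contDiff_const)).cos))).sub
      ((contDiff_const.mul ((contDiff_const.mul (contDiff_id.sub contDiff_const)).sin)))))

noncomputable def chifun (a b a3 b3 s : ℝ) : ℝ :=
  Real.smoothTransition ((s - a3)/(a - a3)) * Real.smoothTransition ((b3 - s)/(b3 - b))

lemma chifun_smooth (a b a3 b3 : ℝ) : ContDiff ℝ (⊤ : ℕ∞) (chifun a b a3 b3) := by
  apply ContDiff.mul
  · exact Real.smoothTransition.contDiff.comp ((contDiff_id.sub contDiff_const).div_const _)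
  · exact Real.smoothTransition.contDiff.comp ((contDiff_const.sub contDiff_id).div_const _)

lemma chifun_one {a b a3 b3 s : ℝ} (h3a : a3 < a) (hb3 : b < b3) (h1 : a ≤ s) (h2 : s ≤ b) :
    chifun a b a3 b3 s = 1 := by
  unfold chifun
  rw [Real.smoothTransition.one_of_one_le, Real.smoothTransition.one_of_one_le, mul_one]
  · rw [le_div_iff₀ (by linarith)]; linarith
  · rw [le_div_iff₀ (by linarith)]; linarith

lemma chifun_zero_left {a b a3 b3 s : ℝ} (h3a : a3 < a) (h : s ≤ a3) :
    chifun a b a3 b3 s = 0 := by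
  unfold chifun
  have h2 : (s - a3)/(a - a3) ≤ 0 :=
    div_nonpos_of_nonpos_of_nonneg (by linarith) (by linarith)
  rw [Real.smoothTransition.zero_of_nonpos h2, zero_mul]

lemma chifun_zero_right {a b a3 b3 s : ℝ} (hb3 : b < b3) (h : b3 ≤ s) :
    chifun a b a3 b3 s = 0 := by
  unfold chifun
  have h2 : (b3 - s)/(b3 - b) ≤ 0 :=
    div_nonpos_of_nonpos_of_nonneg (by linarith) (by linarith)
  rw [Real.smoothTransition.zero_of_nonpos h2, mul_zero]

noncomputable def wfun (α β L a b a3 b3 : ℝ) (s : ℝ) : ℝ :=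
  chifun a b a3 b3 s *
    (if 0 < s ∧ gfun α β L (Real.log s / 2) ≠ 0 then w0fun α β L s else 0)

lemma wfun_eq_w0 {α β L a b a3 b3 s : ℝ} (h3a : a3 < a) (hb3 : b < b3)
    (h1 : a ≤ s) (h2 : s ≤ b) (hs : 0 < s) (hg : gfun α β L (Real.log s / 2) ≠ 0) :
    wfun α β L a b a3 b3 s = w0fun α β L s := by
  unfold wfun
  rw [chifun_one h3a hb3 h1 h2, if_pos ⟨hs, hg⟩, one_mul]

lemma wfun_smooth {α β L a b a3 b3 : ℝ} (h3 : 0 < a3) (h3a : a3 < a) (hb3 : b < b3)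
    (hG : ∀ s, a3 ≤ s → s ≤ b3 → gfun α β L (Real.log s / 2) ≠ 0) :
    ContDiff ℝ (⊤ : ℕ∞) (wfun α β L a b a3 b3) := by
  rw [contDiff_iff_contDiffAt]
  intro s
  by_cases hs : 0 < s ∧ gfun α β L (Real.log s / 2) ≠ 0
  · obtain ⟨hsp, hgs⟩ := hs
    have hlc : ContinuousAt (fun t : ℝ => Real.log t / 2) s :=
      (Real.continuousAt_log hsp.ne').div_const 2
    have hgscont : ContinuousAt (fun t : ℝ => gfun α β L (Real.log t / 2)) s :=
      ((gfun_smooth α β L).continuous.continuousAt).comp hlc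
    have hev : ∀ᶠ t in nhds s, 0 < t ∧ gfun α β L (Real.log t / 2) ≠ 0 := by
      filter_upwards [hgscont.eventually_ne hgs, eventually_gt_nhds hsp] with t h1 h2
      exact ⟨h2, h1⟩
    have heq : wfun α β L a b a3 b3 =ᶠ[nhds s]
        fun t => chifun a b a3 b3 t * w0fun α β L t := by
      filter_upwards [hev] with t ht
      unfold wfun; rw [if_pos ht]
    apply ContDiffAt.congr_of_eventuallyEq _ heq
    apply ContDiffAt.mul ((chifun_smooth a b a3 b3).contDiffAt)
    have hl : ContDiffAt ℝ (⊤ : ℕ∞) (fun t : ℝ => Real.log t / 2) s :=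
      (Real.contDiffAt_log.mpr hsp.ne').div_const 2
    apply ContDiffAt.div
    · exact (((gfun1_smooth α β L).contDiffAt).comp s hl).neg
    · exact ContDiffAt.mul (((gfun_smooth α β L).contDiffAt).comp s hl) contDiffAt_id
    · exact mul_ne_zero hgs hsp.ne'
  · have hout : s < a3 ∨ b3 < s := by
      by_contra hc
      push_neg at hc
      rcases le_or_gt s 0 with h0 | h0
      · exact absurd (lt_of_lt_of_le h3 hc.1) (not_lt.mpr h0)
      · exact hs ⟨h0, hG s hc.1 hc.2⟩
    have hzero : ∀ᶠ t in nhds s, wfun α β L a b a3 b3 t = 0 := by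
      rcases hout with h | h
      · filter_upwards [eventually_lt_nhds h] with t ht
        unfold wfun; rw [chifun_zero_left h3a ht.le, zero_mul]
      · filter_upwards [eventually_gt_nhds h] with t ht
        unfold wfun; rw [chifun_zero_right hb3 ht.le, zero_mul]
    exact ContDiffAt.congr_of_eventuallyEq contDiffAt_const hzero

lemma wfun_hasDerivAt {α β L a b a3 b3 s : ℝ} (h3 : 0 < a3) (h3a : a3 < a) (hb3 : b < b3)
    (h1 : a < s) (h2 : s < b)
    (hg : ∀ t, a < t → t < b → gfun α β L (Real.log t / 2) ≠ 0) :
    HasDerivAt (wfun α β L a b a3 b3) (w0dfun α β L s) s := by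
  have hsp : 0 < s := lt_trans (lt_trans h3 h3a) h1
  have hw0 : HasDerivAt (w0fun α β L) (w0dfun α β L s) s :=
    hasDerivAt_w0fun hsp (hg s h1 h2)
  apply hw0.congr_of_eventuallyEq
  have hoo : Set.Ioo a b ∈ nhds s := Ioo_mem_nhds h1 h2
  filter_upwards [hoo] with t ht
  exact wfun_eq_w0 h3a hb3 ht.1.le ht.2.le (lt_trans (lt_trans h3 h3a) ht.1)
    (hg t ht.1 ht.2)

lemma coords_sum_sq {m : ℕ} (y : EuclideanSpace ℝ (Fin m)) :
    ∑ i, (y i)^2 = ‖y‖^2 := by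
  rw [EuclideanSpace.norm_eq, Real.sq_sqrt (by positivity)]
  exact Finset.sum_congr rfl fun i _ => by rw [Real.norm_eq_abs, sq_abs]

lemma sum_sq_eval {m : ℕ} (φ : EuclideanSpace ℝ (Fin m) →L[ℝ] ℝ) :
    ∑ i, (φ (EuclideanSpace.single i 1))^2 ≤ ‖φ‖^2 := by
  set v := (InnerProductSpace.toDual ℝ (EuclideanSpace ℝ (Fin m))).symm φ with hv
  have hφ : ∀ x, φ x = inner ℝ v x := fun x =>
    (InnerProductSpace.toDual_symm_apply).symm
  have hnv : ‖v‖ = ‖φ‖ := LinearIsometryEquiv.norm_map _ φ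
  have hval : ∀ i, φ (EuclideanSpace.single i 1) = v i := by
    intro i
    rw [hφ, EuclideanSpace.inner_single_right]
    simp
  calc ∑ i, (φ (EuclideanSpace.single i 1))^2 = ∑ i, (v i)^2 := by
        exact Finset.sum_congr rfl fun i _ => by rw [hval]
    _ = ‖v‖^2 := coords_sum_sq v
    _ ≤ ‖φ‖^2 := le_of_eq (by rw [hnv])

lemma hardy_core (n m : ℕ) {r R K : ℝ} (hr : 0 < r) (hrR : r < R) (hK : 0 ≤ K)
    (w dw : ℝ → ℝ) (hwsm : ContDiff ℝ (⊤ : ℕ∞) w)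
    (hder : ∀ s, r^2 < s → s < R^2 → HasDerivAt w (dw s) s)
    (hiden : ∀ s, r^2 < s → s < R^2 → 2*s*(dw s) + (m:ℝ)*(w s) - s*(w s)^2 = K/s)
    (u : EuclideanSpace ℝ (Fin n) × EuclideanSpace ℝ (Fin m) → ℝ)
    (hu : ContDiff ℝ (⊤ : ℕ∞) u) (hcs : HasCompactSupport u)
    (hsupp : tsupport u ⊆ {p : EuclideanSpace ℝ (Fin n) × EuclideanSpace ℝ (Fin m) |
      r < ‖p.2‖ ∧ ‖p.2‖ < R}) :
    K * ∫ p, (u p)^2 / ‖p.2‖^2 ≤ ∫ p, ‖fderiv ℝ u p‖^2 := by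
  haveI : (volume : Measure (EuclideanSpace ℝ (Fin n) × EuclideanSpace ℝ (Fin m))).IsAddHaarMeasure := by
    rw [MeasureTheory.Measure.volume_eq_prod]
    exact MeasureTheory.Measure.prod.instIsAddHaarMeasure _ _
  set W : EuclideanSpace ℝ (Fin n) × EuclideanSpace ℝ (Fin m) → ℝ := fun p => w (‖p.2‖^2) with hW
  set Ψ : Fin m → EuclideanSpace ℝ (Fin n) × EuclideanSpace ℝ (Fin m) → ℝ := fun i p => W p * p.2 i with hΨ
  set e : Fin m → EuclideanSpace ℝ (Fin n) × EuclideanSpace ℝ (Fin m) := fun i => (0, EuclideanSpace.single i 1) with he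
  have hu1 : Differentiable ℝ u := hu.differentiable (by simp)
  set du : (EuclideanSpace ℝ (Fin n) × EuclideanSpace ℝ (Fin m)) → (EuclideanSpace ℝ (Fin n) × EuclideanSpace ℝ (Fin m)) →L[ℝ] ℝ := fderiv ℝ u with hdu
  have hWsm : ContDiff ℝ (⊤ : ℕ∞) W :=
    hwsm.comp ((contDiff_norm_sq ℝ).comp contDiff_snd)
  have hΨsm : ∀ i, ContDiff ℝ (⊤ : ℕ∞) (Ψ i) := fun i =>
    hWsm.mul (((EuclideanSpace.proj i).comp
      (ContinuousLinearMap.snd ℝ (EuclideanSpace ℝ (Fin n)) (EuclideanSpace ℝ (Fin m)))).contDiff)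
  -- derivative of Ψ i at points in the annulus, evaluated at e i
  have hflem : ∀ p : EuclideanSpace ℝ (Fin n) × EuclideanSpace ℝ (Fin m), r < ‖p.2‖ → ‖p.2‖ < R → ∀ i,
      fderiv ℝ (Ψ i) p (e i) = w (‖p.2‖^2) + 2 * dw (‖p.2‖^2) * (p.2 i)^2 := by
    intro p hp1 hp2 i
    have hs1 : r^2 < ‖p.2‖^2 := by nlinarith [norm_nonneg p.2]
    have hs2 : ‖p.2‖^2 < R^2 := by nlinarith [norm_nonneg p.2]
    have hWd : HasFDerivAt W ((dw (‖p.2‖^2)) •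
        ((2 • (innerSL ℝ p.2)).comp (ContinuousLinearMap.snd ℝ (EuclideanSpace ℝ (Fin n)) (EuclideanSpace ℝ (Fin m))))) p := by
      have hnsq : HasFDerivAt (fun p : EuclideanSpace ℝ (Fin n) × EuclideanSpace ℝ (Fin m) => ‖p.2‖^2)
          ((2 • (innerSL ℝ p.2)).comp (ContinuousLinearMap.snd ℝ (EuclideanSpace ℝ (Fin n)) (EuclideanSpace ℝ (Fin m)))) p := by
        simpa using (hasFDerivAt_snd (𝕜 := ℝ) (p := p)).norm_sq
      exact (hder _ hs1 hs2).comp_hasFDerivAt p hnsq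
    have hPid : HasFDerivAt (fun p : EuclideanSpace ℝ (Fin n) × EuclideanSpace ℝ (Fin m) => p.2 i)
        ((EuclideanSpace.proj i).comp (ContinuousLinearMap.snd ℝ (EuclideanSpace ℝ (Fin n)) (EuclideanSpace ℝ (Fin m)))) p :=
      ((EuclideanSpace.proj i).comp (ContinuousLinearMap.snd ℝ (EuclideanSpace ℝ (Fin n)) (EuclideanSpace ℝ (Fin m)))).hasFDerivAt
    have hmul : HasFDerivAt (Ψ i)
        (W p • (EuclideanSpace.proj i).comp
            (ContinuousLinearMap.snd ℝ (EuclideanSpace ℝ (Fin n)) (EuclideanSpace ℝ (Fin m))) +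
          p.2 i • dw (‖p.2‖^2) • (2 • (innerSL ℝ p.2)).comp
            (ContinuousLinearMap.snd ℝ (EuclideanSpace ℝ (Fin n)) (EuclideanSpace ℝ (Fin m)))) p :=
      hWd.mul hPid
    rw [hmul.fderiv]
    have he' : e i = (0, EuclideanSpace.single i 1) := rfl
    rw [he']
    simp only [ContinuousLinearMap.add_apply, ContinuousLinearMap.smul_apply,
      ContinuousLinearMap.comp_apply, ContinuousLinearMap.coe_snd',
      innerSL_apply_apply, smul_eq_mul]
    have hproj : (EuclideanSpace.proj i : EuclideanSpace ℝ (Fin m) →L[ℝ] ℝ)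
        (EuclideanSpace.single i 1) = 1 := by
      simp [EuclideanSpace.proj]
    have hinner : (inner ℝ p.2 (EuclideanSpace.single i (1:ℝ)) : ℝ) = p.2 i := by
      rw [EuclideanSpace.inner_single_right]; simp
    rw [hproj, hinner]
    have hWp : W p = w (‖p.2‖^2) := rfl
    rw [hWp]
    ring
  -- pointwise identity
  have hptwise : ∀ p, (u p)^2 * ((∑ i, fderiv ℝ (Ψ i) p (e i)) - ∑ i, (Ψ i p)^2)
      = K * ((u p)^2 / ‖p.2‖^2) := by
    intro p
    by_cases hup : u p = 0
    · rw [hup]; ring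
    · have hpA : p ∈ tsupport u := subset_tsupport u (Function.mem_support.mpr hup)
      obtain ⟨hp1, hp2⟩ := hsupp hpA
      have hs0 : (0:ℝ) < ‖p.2‖ := lt_trans hr hp1
      have hs1 : r^2 < ‖p.2‖^2 := by nlinarith
      have hs2 : ‖p.2‖^2 < R^2 := by nlinarith
      have hsum1 : ∑ i, fderiv ℝ (Ψ i) p (e i)
          = 2*(‖p.2‖^2)*(dw (‖p.2‖^2)) + (m:ℝ) * (w (‖p.2‖^2)) := by
        rw [Finset.sum_congr rfl (fun i _ => hflem p hp1 hp2 i)]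
        simp only [Finset.sum_add_distrib, Finset.sum_const, Finset.card_univ,
          Fintype.card_fin, nsmul_eq_mul]
        rw [← Finset.mul_sum, coords_sum_sq]
        ring
      have hsum2 : ∑ i, (Ψ i p)^2 = (w (‖p.2‖^2))^2 * ‖p.2‖^2 := by
        have hterm : ∀ i : Fin m, (Ψ i p)^2 = (w (‖p.2‖^2))^2 * (p.2 i)^2 := by
          intro i
          have : Ψ i p = w (‖p.2‖^2) * p.2 i := rfl
          rw [this]; ring
        rw [Finset.sum_congr rfl (fun i _ => hterm i), ← Finset.mul_sum, coords_sum_sq]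
      rw [hsum1, hsum2]
      have hid := hiden _ hs1 hs2
      calc (u p)^2 * ((2*(‖p.2‖^2)*(dw (‖p.2‖^2)) + (m:ℝ)*(w (‖p.2‖^2)))
              - (w (‖p.2‖^2))^2 * ‖p.2‖^2)
          = (u p)^2 * (2*(‖p.2‖^2)*(dw (‖p.2‖^2)) + (m:ℝ)*(w (‖p.2‖^2))
              - (‖p.2‖^2)*(w (‖p.2‖^2))^2) := by ring
        _ = (u p)^2 * (K/(‖p.2‖^2)) := by rw [hid]
        _ = K * ((u p)^2 / ‖p.2‖^2) := by ring
  -- integrability helper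
  have hker : ∀ f : EuclideanSpace ℝ (Fin n) × EuclideanSpace ℝ (Fin m) → ℝ,
      Continuous f → (∀ p, p ∉ tsupport u → f p = 0) → Integrable f volume := by
    intro f hf hvan
    exact hf.integrable_of_hasCompactSupport (HasCompactSupport.intro hcs hvan)
  have hvan_u : ∀ p, p ∉ tsupport u → u p = 0 := fun p hp =>
    image_eq_zero_of_notMem_tsupport hp
  have hvan_du : ∀ p, p ∉ tsupport u → du p = 0 := by
    intro p hp
    by_contra hne
    exact hp (support_fderiv_subset ℝ (Function.mem_support.mpr hne))
  have hcontu : Continuous u := hu.continuous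
  have hcont_du : Continuous du := hu.continuous_fderiv (by simp)
  have hcont_dui : ∀ v, Continuous (fun p => du p v) := fun v =>
    hcont_du.clm_apply continuous_const
  have hcontΨ : ∀ i, Continuous (Ψ i) := fun i => (hΨsm i).continuous
  have hcont_dΨ : ∀ i, Continuous (fun p => fderiv ℝ (Ψ i) p (e i)) := fun i =>
    ((hΨsm i).continuous_fderiv (by simp)).clm_apply continuous_const
  -- derivative of u*u
  have hfuu : ∀ p, HasFDerivAt (fun q => u q * u q) (u p • du p + u p • du p) p :=
    fun p => ((hu1 p).hasFDerivAt).mul ((hu1 p).hasFDerivAt)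
  have hfuu_app : ∀ p v, fderiv ℝ (fun q => u q * u q) p v = 2*(u p)*(du p v) := by
    intro p v
    rw [(hfuu p).fderiv]
    simp only [ContinuousLinearMap.add_apply, ContinuousLinearMap.smul_apply, smul_eq_mul]
    ring
  -- integrable pieces
  have hIdusq : Integrable (fun p => ‖du p‖^2) volume :=
    hker _ (hcont_du.norm.pow 2) (fun p hp => by rw [hvan_du p hp]; simp)
  have hI1 : ∀ i, Integrable (fun p => (du p (e i))^2) volume := fun i =>
    hker _ ((hcont_dui (e i)).pow 2) (fun p hp => by rw [hvan_du p hp]; simp)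
  have hIB1 : ∀ i : Fin m, Integrable (fun p => 2*(Ψ i p)*(u p * du p (e i))) volume :=
    fun i => hker _ ((continuous_const.mul (hcontΨ i)).mul (hcontu.mul (hcont_dui (e i))))
      (fun p hp => by rw [hvan_u p hp]; ring)
  have hIC1 : ∀ i : Fin m, Integrable (fun p => (u p * Ψ i p)^2) volume :=
    fun i => hker _ ((hcontu.mul (hcontΨ i)).pow 2)
      (fun p hp => by rw [hvan_u p hp]; ring)
  have hIdPsi : ∀ i : Fin m, Integrable (fun p => fderiv ℝ (Ψ i) p (e i) * (u p * u p)) volume :=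
    fun i => hker _ ((hcont_dΨ i).mul (hcontu.mul hcontu))
      (fun p hp => by rw [hvan_u p hp]; ring)
  have hIA : Integrable (fun p => ∑ i, (du p (e i))^2) volume :=
    integrable_finset_sum _ (fun i _ => hI1 i)
  have hIB : Integrable (fun p => ∑ i, 2*(Ψ i p)*(u p * du p (e i))) volume :=
    integrable_finset_sum _ (fun i _ => hIB1 i)
  have hIC : Integrable (fun p => ∑ i, (u p * Ψ i p)^2) volume :=
    integrable_finset_sum _ (fun i _ => hIC1 i)
  have hIu2dΨ : Integrable (fun p => (u p)^2 * (∑ i, fderiv ℝ (Ψ i) p (e i))) volume :=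
    hker _ ((hcontu.pow 2).mul (continuous_finset_sum _ (fun i _ => hcont_dΨ i)))
      (fun p hp => by rw [hvan_u p hp]; ring)
  have hIu2Ψ : Integrable (fun p => (u p)^2 * (∑ i, (Ψ i p)^2)) volume :=
    hker _ ((hcontu.pow 2).mul (continuous_finset_sum _ (fun i _ => (hcontΨ i).pow 2)))
      (fun p hp => by rw [hvan_u p hp]; ring)
  -- integration by parts
  have hibp : ∀ i : Fin m, ∫ p, Ψ i p * fderiv ℝ (fun q => u q * u q) p (e i)
      = - ∫ p, fderiv ℝ (Ψ i) p (e i) * (u p * u p) := by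
    intro i
    apply integral_mul_fderiv_eq_neg_fderiv_mul_of_integrable
    · exact hIdPsi i
    · have : (fun p => Ψ i p * fderiv ℝ (fun q => u q * u q) p (e i))
          = fun p => Ψ i p * (2*(u p)*(du p (e i))) := by
        funext p; rw [hfuu_app]
      rw [this]
      exact hker _ ((hcontΨ i).mul ((continuous_const.mul hcontu).mul (hcont_dui (e i))))
        (fun p hp => by rw [hvan_u p hp]; ring)
    · exact hker _ ((hcontΨ i).mul (hcontu.mul hcontu))
        (fun p hp => by rw [hvan_u p hp]; ring)
    · exact fun x _ => (hΨsm i).differentiable (by simp) x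
    · exact fun x _ => (hu1 x).mul (hu1 x)
  have hcross_i : ∀ i : Fin m, ∫ p, 2*(Ψ i p)*(u p * du p (e i))
      = - ∫ p, fderiv ℝ (Ψ i) p (e i) * (u p * u p) := by
    intro i
    rw [show (fun p => 2*(Ψ i p)*(u p * du p (e i)))
        = fun p => Ψ i p * fderiv ℝ (fun q => u q * u q) p (e i) from
      funext fun p => by rw [hfuu_app]; ring]
    exact hibp i
  have hcross : ∫ p, ∑ i, 2*(Ψ i p)*(u p * du p (e i))
      = - ∫ p, (u p)^2 * (∑ i, fderiv ℝ (Ψ i) p (e i)) := by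
    rw [integral_finset_sum _ (fun i _ => hIB1 i)]
    rw [Finset.sum_congr rfl (fun i _ => hcross_i i)]
    rw [Finset.sum_neg_distrib, ← integral_finset_sum _ (fun i _ => hIdPsi i)]
    congr 1
    congr 1
    funext p
    rw [Finset.mul_sum]
    exact Finset.sum_congr rfl fun i _ => by ring
  have hquad : ∫ p, ∑ i, (u p * Ψ i p)^2 = ∫ p, (u p)^2 * (∑ i, (Ψ i p)^2) := by
    congr 1
    funext p
    rw [Finset.mul_sum]
    exact Finset.sum_congr rfl fun i _ => by ring
  -- expansion and positivity
  have h0 : (0:ℝ) ≤ ∫ p, ∑ i, (du p (e i) + u p * Ψ i p)^2 :=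
    integral_nonneg fun p => Finset.sum_nonneg fun i _ => sq_nonneg _
  have hsplit : ∫ p, ∑ i, (du p (e i) + u p * Ψ i p)^2
      = (∫ p, ∑ i, (du p (e i))^2) + (∫ p, ∑ i, 2*(Ψ i p)*(u p * du p (e i)))
        + ∫ p, ∑ i, (u p * Ψ i p)^2 := by
    have hexp : (fun p => ∑ i, (du p (e i) + u p * Ψ i p)^2)
        = fun p => ((∑ i, (du p (e i))^2) + (∑ i, 2*(Ψ i p)*(u p * du p (e i))))
          + ∑ i, (u p * Ψ i p)^2 := by
      funext p
      rw [← Finset.sum_add_distrib, ← Finset.sum_add_distrib]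
      exact Finset.sum_congr rfl fun i _ => by ring
    have hIAB : Integrable (fun p => (∑ i, (du p (e i))^2)
        + (∑ i, 2*(Ψ i p)*(u p * du p (e i)))) volume := hIA.add hIB
    rw [hexp, integral_add hIAB hIC, integral_add hIA hIB]
  have hdiff : (∫ p, (u p)^2 * (∑ i, fderiv ℝ (Ψ i) p (e i)))
      - (∫ p, (u p)^2 * (∑ i, (Ψ i p)^2)) = ∫ p, K * ((u p)^2 / ‖p.2‖^2) := by
    rw [← integral_sub hIu2dΨ hIu2Ψ]
    congr 1
    funext p
    rw [← hptwise p]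
    ring
  have hlast : ∫ p, ∑ i, (du p (e i))^2 ≤ ∫ p, ‖du p‖^2 := by
    apply integral_mono hIA hIdusq
    intro p
    have hφ : ‖(du p).comp (ContinuousLinearMap.inr ℝ
        (EuclideanSpace ℝ (Fin n)) (EuclideanSpace ℝ (Fin m)))‖ ≤ ‖du p‖ := by
      have hinr : ‖ContinuousLinearMap.inr ℝ
          (EuclideanSpace ℝ (Fin n)) (EuclideanSpace ℝ (Fin m))‖ ≤ 1 := by
        apply ContinuousLinearMap.opNorm_le_bound _ zero_le_one
        intro y
        rw [one_mul]
        have : ‖((0 : EuclideanSpace ℝ (Fin n)), y)‖ = max ‖(0 : EuclideanSpace ℝ (Fin n))‖ ‖y‖ :=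
          rfl
        simp [ContinuousLinearMap.inr_apply, Prod.norm_def]
      calc ‖(du p).comp _‖ ≤ ‖du p‖ * _ := ContinuousLinearMap.opNorm_comp_le _ _
        _ ≤ ‖du p‖ * 1 := by
            exact mul_le_mul_of_nonneg_left hinr (norm_nonneg _)
        _ = ‖du p‖ := mul_one _
    have heval : ∀ i : Fin m, ((du p).comp (ContinuousLinearMap.inr ℝ
        (EuclideanSpace ℝ (Fin n)) (EuclideanSpace ℝ (Fin m)))) (EuclideanSpace.single i 1)
        = du p (e i) := fun i => rfl
    calc ∑ i, (du p (e i))^2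
        = ∑ i, (((du p).comp (ContinuousLinearMap.inr ℝ (EuclideanSpace ℝ (Fin n))
            (EuclideanSpace ℝ (Fin m)))) (EuclideanSpace.single i 1))^2 :=
          Finset.sum_congr rfl fun i _ => by rw [heval]
      _ ≤ ‖(du p).comp (ContinuousLinearMap.inr ℝ (EuclideanSpace ℝ (Fin n))
            (EuclideanSpace ℝ (Fin m)))‖^2 := sum_sq_eval _
      _ ≤ ‖du p‖^2 := by
          exact pow_le_pow_left₀ (norm_nonneg _) hφ 2
  have hKint : K * ∫ p, (u p)^2 / ‖p.2‖^2 = ∫ p, K * ((u p)^2 / ‖p.2‖^2) :=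
    (integral_const_mul K _).symm
  rw [hKint]
  linarith [h0, hsplit, hcross, hquad, hdiff, hlast]


theorem stmt18 (n m : ℕ) (hm : m ≠ 2) (hn : 1 ≤ n) (hmn : 3 ≤ m + n)
    (r R : ℝ) (hr : 0 < r) (hrR : r < R) :
    ∃ c > (0 : ℝ),
      ∀ Ω : Set ((EuclideanSpace ℝ (Fin n)) × (EuclideanSpace ℝ (Fin m))),
        Ω ⊆ {p : (EuclideanSpace ℝ (Fin n)) × (EuclideanSpace ℝ (Fin m)) |
          r < ‖p.2‖ ∧ ‖p.2‖ < R} →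
        ∀ u : (EuclideanSpace ℝ (Fin n)) × (EuclideanSpace ℝ (Fin m)) → ℝ,
          ContDiff ℝ (⊤ : ℕ∞) u → HasCompactSupport u → tsupport u ⊆ Ω →
          (∫ p, ‖fderiv ℝ u p‖ ^ 2) -
              (((m : ℝ) - 2) / 2) ^ 2 * (∫ p, (u p) ^ 2 / ‖p.2‖ ^ 2) ≥
            c * ∫ p, ‖fderiv ℝ u p‖ ^ 2 := by
  have hRpos : (0:ℝ) < R := lt_trans hr hrR
  have hΔ : 0 < Real.log R - Real.log r := sub_pos.mpr (Real.log_lt_log hr hrR)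
  set Δ := Real.log R - Real.log r with hΔdef
  set L := (Real.log r + Real.log R)/2 with hLdef
  set α := ((m:ℝ)-2)/2 with hαdef
  set β := Real.pi/(2*Δ) with hβdef
  have hβpos : 0 < β := div_pos Real.pi_pos (by linarith)
  set K := α^2 + β^2 with hKdef
  have hKpos : 0 < K := by positivity
  refine ⟨β^2/K, div_pos (by positivity) hKpos, ?_⟩
  intro Ω hΩ u hu hcs hsupp
  set a3 := Real.exp (2*(L - 3*Δ/4)) with ha3def
  set b3 := Real.exp (2*(L + 3*Δ/4)) with hb3def
  have hLr : L = Real.log r + Δ/2 := by rw [hLdef, hΔdef]; ring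
  have hLR : L = Real.log R - Δ/2 := by rw [hLdef, hΔdef]; ring
  have hr2 : r^2 = Real.exp (2*Real.log r) := by
    rw [show (2:ℝ)*Real.log r = Real.log r + Real.log r by ring, Real.exp_add,
      Real.exp_log hr]; ring
  have hR2 : R^2 = Real.exp (2*Real.log R) := by
    rw [show (2:ℝ)*Real.log R = Real.log R + Real.log R by ring, Real.exp_add,
      Real.exp_log hRpos]; ring
  have ha3pos : 0 < a3 := Real.exp_pos _
  have h3a : a3 < r^2 := by
    rw [hr2, ha3def]
    exact Real.exp_lt_exp.mpr (by linarith)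
  have hb3' : R^2 < b3 := by
    rw [hR2, hb3def]
    exact Real.exp_lt_exp.mpr (by linarith)
  have hGpos : ∀ s, a3 ≤ s → s ≤ b3 → gfun α β L (Real.log s / 2) ≠ 0 := by
    intro s h1 h2
    have hspos : 0 < s := lt_of_lt_of_le ha3pos h1
    have hl1 : 2*(L - 3*Δ/4) ≤ Real.log s := by
      calc 2*(L-3*Δ/4) = Real.log a3 := by rw [ha3def, Real.log_exp]
        _ ≤ Real.log s := Real.log_le_log ha3pos h1
    have hl2 : Real.log s ≤ 2*(L + 3*Δ/4) := by
      calc Real.log s ≤ Real.log b3 := Real.log_le_log hspos h2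
        _ = 2*(L + 3*Δ/4) := by rw [hb3def, Real.log_exp]
    have hβΔ : β * (3*Δ/4) = 3*Real.pi/8 := by
      rw [hβdef]; field_simp; ring
    have harg1 : β*(Real.log s / 2 - L) < Real.pi/2 := by
      have ht : Real.log s / 2 - L ≤ 3*Δ/4 := by linarith
      have h := mul_le_mul_of_nonneg_left ht hβpos.le
      rw [hβΔ] at h
      linarith [Real.pi_pos]
    have harg2 : -(Real.pi/2) < β*(Real.log s / 2 - L) := by
      have ht : -(3*Δ/4) ≤ Real.log s / 2 - L := by linarith
      have h := mul_le_mul_of_nonneg_left ht hβpos.le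
      have h' : β * -(3*Δ/4) = -(3*Real.pi/8) := by rw [mul_neg, hβΔ]
      rw [h'] at h
      linarith [Real.pi_pos]
    unfold gfun
    exact mul_ne_zero (Real.exp_ne_zero _)
      (ne_of_gt (Real.cos_pos_of_mem_Ioo ⟨harg2, harg1⟩))
  have hsupp' : tsupport u ⊆
      {p : (EuclideanSpace ℝ (Fin n)) × (EuclideanSpace ℝ (Fin m)) |
        r < ‖p.2‖ ∧ ‖p.2‖ < R} := subset_trans hsupp hΩ
  have hg_inner : ∀ t, r^2 < t → t < R^2 → gfun α β L (Real.log t / 2) ≠ 0 :=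
    fun t h1 h2 => hGpos t (le_of_lt (lt_trans h3a h1)) (le_of_lt (lt_trans h2 hb3'))
  have hsm := wfun_smooth (α := α) (β := β) (L := L) (a := r^2) (b := R^2)
    ha3pos h3a hb3' hGpos
  have hder : ∀ s, r^2 < s → s < R^2 →
      HasDerivAt (wfun α β L (r^2) (R^2) a3 b3) (w0dfun α β L s) s :=
    fun s h1 h2 => wfun_hasDerivAt ha3pos h3a hb3' h1 h2 hg_inner
  have hiden : ∀ s, r^2 < s → s < R^2 →
      2*s*(w0dfun α β L s) + (m:ℝ)*(wfun α β L (r^2) (R^2) a3 b3 s)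
        - s*(wfun α β L (r^2) (R^2) a3 b3 s)^2 = K/s := by
    intro s h1 h2
    have hr2pos : (0:ℝ) < r^2 := by positivity
    have hs0 : 0 < s := lt_trans hr2pos h1
    rw [wfun_eq_w0 h3a hb3' h1.le h2.le hs0 (hg_inner s h1 h2)]
    exact key_identity hs0 (hg_inner s h1 h2) (by rw [hαdef]; push_cast; ring)
  have hcore := hardy_core n m hr hrR hKpos.le _ _ hsm hder hiden u
    (hu.of_le (by simp)) hcs hsupp'
  have hQ0 : 0 ≤ ∫ p, (u p)^2/‖p.2‖^2 :=
    integral_nonneg fun p => by positivity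
  rw [ge_iff_le]
  set A := ∫ p, ‖fderiv ℝ u p‖^2 with hA
  set Q := ∫ p, (u p)^2/‖p.2‖^2 with hQ
  have h1 : α^2*Q ≤ α^2*(A/K) :=
    mul_le_mul_of_nonneg_left ((le_div_iff₀ hKpos).mpr (by linarith [hcore]))
      (sq_nonneg α)
  have h2 : β^2/K*A = A - α^2*(A/K) := by field_simp; ring
  linarith
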